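/- arXiv:2011.12731 — 2 statements merged into one kernel-verified Lean document; each statement's English description precedes it below -/
import Mathlib

section
/- (Rosenthal's inequality, as used) Let p ∈ (2, ∞). There exists a constant C = C(p) such that for any independent real random variables Y_1, …, Y_n in L^p with E[Y_j] = 0 for all j, one has E[|∑_{j=1}^n Y_j|^p]^{1/p} ≤ C · max{ (∑_{j=1}^n E[|Y_j|^p])^{1/p}, (∑_{j=1}^n E[|Y_j|^2])^{1/2} }. -/
open MeasureTheory ProbabilityTheory Finset
open scoped ENNReal

/-- Mean value theorem for `x ^ q` on the positive reals. -/
lemma ros_mvt {q : ℝ} (hq : 1 ≤ q) {a b : ℝ} (ha : 0 < a) (hb : 0 < b) (hab : a ≠ b) :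
    ∃ ξ, ξ ∈ Set.Ioo (min a b) (max a b) ∧ b ^ q - a ^ q = q * ξ ^ (q - 1) * (b - a) := by
  have key : ∀ u v : ℝ, 0 < u → 0 < v → u < v →
      ∃ ξ, ξ ∈ Set.Ioo u v ∧ v ^ q - u ^ q = q * ξ ^ (q - 1) * (v - u) := by
    intro u v hu hv huv
    have hderiv : ∀ x ∈ Set.Ioo u v, HasDerivAt (fun t : ℝ => t ^ q) (q * x ^ (q - 1)) x := by
      intro x _
      simpa [mul_comm] using Real.hasDerivAt_rpow_const (x := x) (p := q) (Or.inr hq)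
    have hcont : ContinuousOn (fun t : ℝ => t ^ q) (Set.Icc u v) := by
      intro x _
      exact ((Real.hasDerivAt_rpow_const (x := x) (p := q) (Or.inr hq)).continuousAt).continuousWithinAt
    obtain ⟨ξ, hξ, hslope⟩ := exists_hasDerivAt_eq_slope (fun t : ℝ => t ^ q)
      (fun x => q * x ^ (q - 1)) huv hcont hderiv
    refine ⟨ξ, hξ, ?_⟩
    have hne : v - u ≠ 0 := sub_ne_zero.2 (ne_of_gt huv)
    field_simp at hslope
    linarith [hslope]
  rcases lt_or_gt_of_ne hab with h | h
  · obtain ⟨ξ, hξ, he⟩ := key a b ha hb h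
    exact ⟨ξ, by simpa [min_eq_left h.le, max_eq_right h.le] using hξ, he⟩
  · obtain ⟨ξ, hξ, he⟩ := key b a hb ha h
    refine ⟨ξ, by simpa [min_eq_right h.le, max_eq_left h.le] using hξ, by linarith⟩

/-- Second order Taylor-type bound for `x ^ p` on positive reals. -/
lemma ros_taylor {p : ℝ} (hp : 2 ≤ p) {u v : ℝ} (hu : 0 < u) (hv : 0 < v) :
    |v ^ p - u ^ p - p * u ^ (p - 1) * (v - u)|
      ≤ p * (p - 1) * max u v ^ (p - 2) * (v - u) ^ 2 := by
  have hp1 : (1 : ℝ) ≤ p - 1 := by linarith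
  have hRHS : 0 ≤ p * (p - 1) * max u v ^ (p - 2) * (v - u) ^ 2 := by
    have h0 : (0:ℝ) ≤ max u v ^ (p - 2) := Real.rpow_nonneg (le_max_of_le_left hu.le) _
    positivity
  rcases eq_or_ne u v with rfl | huv
  · simpa using hRHS
  obtain ⟨ξ₁, hξ₁, he₁⟩ := ros_mvt (by linarith : (1:ℝ) ≤ p) hu hv huv
  have hξ₁pos : 0 < ξ₁ := lt_of_le_of_lt (le_min hu.le hv.le) hξ₁.1
  rcases eq_or_ne u ξ₁ with rfl | huξ
  · rw [he₁]
    have : p * u ^ (p - 1) * (v - u) - p * u ^ (p - 1) * (v - u) = 0 := by ring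
    rw [this, abs_zero]
    exact hRHS
  obtain ⟨ξ₂, hξ₂, he₂⟩ := ros_mvt hp1 hu hξ₁pos huξ
  have hξ₂pos : 0 < ξ₂ := lt_of_le_of_lt (le_min hu.le hξ₁pos.le) hξ₂.1
  have hD : v ^ p - u ^ p - p * u ^ (p - 1) * (v - u)
      = p * ((p - 1) * ξ₂ ^ (p - 1 - 1) * (ξ₁ - u)) * (v - u) := by
    linear_combination he₁ + p * (v - u) * he₂
  have hξ₂le : ξ₂ ≤ max u v := by
    have h1 : ξ₂ < max u ξ₁ := hξ₂.2
    have h2 : ξ₁ ≤ max u v := hξ₁.2.le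
    have : max u ξ₁ ≤ max u v := max_le (le_max_left _ _) h2
    linarith
  have hξ₁u : |ξ₁ - u| ≤ |v - u| := by
    rcases hξ₁ with ⟨hl, hr⟩
    rw [abs_le]
    constructor
    · have h1 : u - |v - u| ≤ min u v :=
        le_min (by linarith [abs_nonneg (v - u)]) (by linarith [neg_abs_le (v - u)])
      linarith
    · have h2 : max u v ≤ u + |v - u| :=
        max_le (by linarith [abs_nonneg (v - u)]) (by linarith [le_abs_self (v - u)])
      linarith
  have hpow : ξ₂ ^ (p - 1 - 1) ≤ max u v ^ (p - 2) := by
    rw [show p - 1 - 1 = p - 2 by ring]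
    exact Real.rpow_le_rpow hξ₂pos.le hξ₂le (by linarith)
  have hpow0 : (0:ℝ) ≤ ξ₂ ^ (p - 1 - 1) := Real.rpow_nonneg hξ₂pos.le _
  rw [hD]
  calc |p * ((p - 1) * ξ₂ ^ (p - 1 - 1) * (ξ₁ - u)) * (v - u)|
      = p * (p - 1) * ξ₂ ^ (p - 1 - 1) * (|ξ₁ - u| * |v - u|) := by
        rw [abs_mul, abs_mul, abs_mul, abs_mul, abs_of_nonneg (by linarith : (0:ℝ) ≤ p),
          abs_of_nonneg (by linarith : (0:ℝ) ≤ p - 1), abs_of_nonneg hpow0]; ring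
    _ ≤ p * (p - 1) * max u v ^ (p - 2) * (|v - u| * |v - u|) := by
        have h1 : |ξ₁ - u| * |v - u| ≤ |v - u| * |v - u| :=
          mul_le_mul_of_nonneg_right hξ₁u (abs_nonneg _)
        have h2 : p * (p - 1) * ξ₂ ^ (p - 1 - 1) ≤ p * (p - 1) * max u v ^ (p - 2) :=
          mul_le_mul_of_nonneg_left hpow (by nlinarith)
        have h3 : (0:ℝ) ≤ |ξ₁ - u| * |v - u| := mul_nonneg (abs_nonneg _) (abs_nonneg _)
        have h4 : (0:ℝ) ≤ p * (p - 1) * max u v ^ (p - 2) :=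
          mul_nonneg (mul_nonneg (by linarith) (by linarith))
            (Real.rpow_nonneg (le_max_of_le_left hu.le) _)
        exact mul_le_mul h2 h1 h3 h4
    _ = p * (p - 1) * max u v ^ (p - 2) * (v - u) ^ 2 := by
        rw [← abs_mul, ← sq, abs_sq]

noncomputable def rosc (p : ℝ) : ℝ := p * (p - 1) * 2 ^ p + 3 ^ p + p * 2 ^ p

lemma rosc_pos {p : ℝ} (hp : 2 < p) : 0 < rosc p := by
  have h2 : (0:ℝ) < 2 ^ p := Real.rpow_pos_of_pos two_pos p
  have h3 : (0:ℝ) < 3 ^ p := Real.rpow_pos_of_pos three_pos p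
  have h4 : (0:ℝ) < p * (p - 1) * 2 ^ p := by
    apply mul_pos (mul_pos (by linarith) (by linarith)) h2
  have h5 : (0:ℝ) < p * 2 ^ p := mul_pos (by linarith) h2
  unfold rosc; linarith

lemma ros_pointwise_aux {p : ℝ} (hp : 2 < p) (x y : ℝ) (hx : 0 ≤ x) :
    |x + y| ^ p ≤ |x| ^ p + p * |x| ^ (p - 2) * x * y
      + rosc p * (|x| ^ (p - 2) * y ^ 2 + |y| ^ p) := by
  have h2p : (0:ℝ) < 2 ^ p := Real.rpow_pos_of_pos two_pos p
  have h3p : (0:ℝ) < 3 ^ p := Real.rpow_pos_of_pos three_pos p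
  have hxp2 : (0:ℝ) ≤ |x| ^ (p - 2) := Real.rpow_nonneg (abs_nonneg x) _
  have hyp : (0:ℝ) ≤ |y| ^ p := Real.rpow_nonneg (abs_nonneg y) _
  rcases eq_or_ne y 0 with rfl | hy
  · simp [Real.zero_rpow (by positivity : p ≠ 0)]
  by_cases hxy : 2 * |y| ≤ x
  · -- Taylor case
    have hx' : 0 < x := lt_of_lt_of_le (by positivity) hxy
    have hv : 0 < x + y := by cases abs_cases y with
      | inl h => nlinarith | inr h => nlinarith
    have key := ros_taylor hp.le hx' hv
    have hvx : x + y - x = y := by ring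
    rw [hvx] at key
    have hmax : max x (x + y) ≤ 2 * x := by
      apply max_le (by linarith)
      cases abs_cases y with
      | inl h => nlinarith | inr h => nlinarith
    have hmaxpow : max x (x + y) ^ (p - 2) ≤ 2 ^ (p - 2) * x ^ (p - 2) := by
      rw [← Real.mul_rpow (by norm_num) hx'.le]
      exact Real.rpow_le_rpow (le_max_of_le_left hx'.le) hmax (by linarith)
    have h2sub : (2:ℝ) ^ (p - 2) ≤ 2 ^ p :=
      Real.rpow_le_rpow_of_exponent_le one_le_two (by linarith)
    have habs : |x + y| ^ p = (x + y) ^ p := by rw [abs_of_pos hv]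
    have habsx : |x| ^ p = x ^ p := by rw [abs_of_nonneg hx]
    have hmul : x ^ (p - 2) * x = x ^ (p - 1) := by
      calc x ^ (p - 2) * x = x ^ (p - 2) * x ^ (1:ℝ) := by rw [Real.rpow_one]
        _ = x ^ (p - 2 + 1) := (Real.rpow_add hx' _ _).symm
        _ = x ^ (p - 1) := by rw [show p - 2 + 1 = p - 1 by ring]
    have hxpow : p * |x| ^ (p - 2) * x * y = p * x ^ (p - 1) * y := by
      rw [abs_of_nonneg hx, mul_assoc p _ x, hmul]
    have key' : (x + y) ^ p - x ^ p - p * x ^ (p - 1) * y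
        ≤ p * (p - 1) * max x (x + y) ^ (p - 2) * y ^ 2 := (abs_le.1 key).2
    have hy2 : (0:ℝ) ≤ y ^ 2 := sq_nonneg y
    have hmb : max x (x + y) ^ (p - 2) ≤ 2 ^ p * x ^ (p - 2) :=
      le_trans hmaxpow (mul_le_mul_of_nonneg_right h2sub (Real.rpow_nonneg hx'.le _))
    have hb1 : p * (p - 1) * max x (x + y) ^ (p - 2) * y ^ 2
        ≤ p * (p - 1) * (2 ^ p * x ^ (p - 2)) * y ^ 2 :=
      mul_le_mul_of_nonneg_right
        (mul_le_mul_of_nonneg_left hmb (by nlinarith : (0:ℝ) ≤ p * (p - 1))) hy2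
    have t1 : (0:ℝ) ≤ (3 ^ p + p * 2 ^ p) * (x ^ (p - 2) * y ^ 2) :=
      mul_nonneg (by positivity) (mul_nonneg (Real.rpow_nonneg hx'.le _) hy2)
    have t2 : (0:ℝ) ≤ rosc p * |y| ^ p := mul_nonneg (rosc_pos hp).le hyp
    have hb2 : p * (p - 1) * (2 ^ p * x ^ (p - 2)) * y ^ 2
        ≤ rosc p * (x ^ (p - 2) * y ^ 2 + |y| ^ p) := by
      unfold rosc at t2 ⊢; nlinarith [t1, t2]
    rw [habs, habsx, hxpow, abs_of_nonneg hx]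
    linarith [key', hb1, hb2]
  · -- crude case
    have hxlt : x < 2 * |y| := not_le.mp hxy
    have hyabs : 0 < |y| := abs_pos.mpr hy
    have hp0 : (0:ℝ) < p := by linarith
    have f1 : |x + y| ≤ 3 * |y| := by
      calc |x + y| ≤ |x| + |y| := abs_add_le x y
        _ = x + |y| := by rw [abs_of_nonneg hx]
        _ ≤ 3 * |y| := by linarith
    have f2 : |x + y| ^ p ≤ 3 ^ p * |y| ^ p := by
      rw [← Real.mul_rpow (by norm_num) (abs_nonneg y)]
      exact Real.rpow_le_rpow (abs_nonneg _) f1 hp0.le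
    have hyy : |y| ^ (p - 2) * |y| ^ (2:ℕ) = |y| ^ p := by
      rw [← Real.rpow_natCast |y| 2, ← Real.rpow_add hyabs]; norm_num
    have h21 : (2:ℝ) ^ (p - 1) = 2 ^ (p - 2) * 2 := by
      have h := Real.rpow_add (two_pos) (p - 2) 1
      rw [Real.rpow_one] at h
      rw [show p - 1 = p - 2 + 1 by ring, h]
    have h22 : (2:ℝ) ^ (p - 1) ≤ 2 ^ p :=
      Real.rpow_le_rpow_of_exponent_le one_le_two (by linarith)
    have hxpow2 : x ^ (p - 2) ≤ 2 ^ (p - 2) * |y| ^ (p - 2) := by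
      rw [← Real.mul_rpow (by norm_num) (abs_nonneg y)]
      exact Real.rpow_le_rpow hx hxlt.le (by linarith)
    have f3 : |p * |x| ^ (p - 2) * x * y| ≤ p * 2 ^ p * |y| ^ p := by
      rw [abs_mul, abs_mul, abs_mul, abs_of_nonneg hp0.le,
        abs_of_nonneg (Real.rpow_nonneg (abs_nonneg x) _), abs_of_nonneg hx]
      have hnn : (0:ℝ) ≤ p * (2 ^ (p - 2) * |y| ^ (p - 2)) := by positivity
      calc p * x ^ (p - 2) * x * |y| ≤ p * (2 ^ (p - 2) * |y| ^ (p - 2)) * (2 * |y|) * |y| := by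
            apply mul_le_mul_of_nonneg_right _ (abs_nonneg y)
            exact mul_le_mul (mul_le_mul_of_nonneg_left hxpow2 hp0.le) hxlt.le hx hnn
        _ = p * (2 ^ (p - 2) * 2) * (|y| ^ (p - 2) * |y| ^ (2:ℕ)) := by ring
        _ = p * 2 ^ (p - 1) * |y| ^ p := by rw [hyy, h21]
        _ ≤ p * 2 ^ p * |y| ^ p := by
            apply mul_le_mul_of_nonneg_right (mul_le_mul_of_nonneg_left h22 hp0.le) hyp
    have f4 : (3 ^ p + p * 2 ^ p) * |y| ^ p ≤ rosc p * (|x| ^ (p - 2) * y ^ 2 + |y| ^ p) := by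
      apply mul_le_mul _ (le_add_of_nonneg_left (mul_nonneg hxp2 (sq_nonneg y))) hyp
        (rosc_pos hp).le
      unfold rosc
      nlinarith [mul_pos (mul_pos (by linarith : (0:ℝ) < p) (by linarith : (0:ℝ) < p - 1)) h2p]
    have f5 : (3 ^ p + p * 2 ^ p) * |y| ^ p = 3 ^ p * |y| ^ p + p * 2 ^ p * |y| ^ p := by ring
    have f6 := neg_abs_le (p * |x| ^ (p - 2) * x * y)
    have f7 : (0:ℝ) ≤ |x| ^ p := Real.rpow_nonneg (abs_nonneg x) p
    linarith [f2, f3, f4, f6, f7]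

lemma ros_pointwise {p : ℝ} (hp : 2 < p) (x y : ℝ) :
    |x + y| ^ p ≤ |x| ^ p + p * |x| ^ (p - 2) * x * y
      + rosc p * (|x| ^ (p - 2) * y ^ 2 + |y| ^ p) := by
  rcases le_or_gt 0 x with hx | hx
  · exact ros_pointwise_aux hp x y hx
  · have h := ros_pointwise_aux hp (-x) (-y) (by linarith)
    rw [show -x + -y = -(x + y) by ring, abs_neg, abs_neg, abs_neg] at h
    calc |x + y| ^ p ≤ |x| ^ p + p * |x| ^ (p - 2) * -x * -y
          + rosc p * (|x| ^ (p - 2) * (-y) ^ 2 + |y| ^ p) := h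
      _ = |x| ^ p + p * |x| ^ (p - 2) * x * y
          + rosc p * (|x| ^ (p - 2) * y ^ 2 + |y| ^ p) := by ring

lemma ros_jensen {Ω : Type} [MeasurableSpace Ω] {P : Measure Ω} [IsProbabilityMeasure P]
    {p q : ℝ} (hq : 0 < q) (hqp : q < p) {f : Ω → ℝ} (hf : MemLp f (ENNReal.ofReal p) P) :
    ∫ ω, |f ω| ^ q ∂P ≤ (∫ ω, |f ω| ^ p ∂P) ^ (q / p) := by
  have hp0 : (0:ℝ) < p := lt_trans hq hqp
  set r : ℝ := p / q with hr
  have hr1 : 1 < r := (one_lt_div hq).mpr hqp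
  have hpq : r.HolderConjugate (Real.conjExponent r) := Real.HolderConjugate.conjExponent hr1
  have hF : MemLp (fun ω => |f ω| ^ q) (ENNReal.ofReal r) P := by
    have hmeas : AEStronglyMeasurable (fun ω => |f ω| ^ q) P := by
      have hcont : Continuous fun t : ℝ => |t| ^ q :=
        continuous_abs.rpow_const (fun x => Or.inr hq.le)
      exact hcont.comp_aestronglyMeasurable hf.1
    refine ⟨hmeas, ?_⟩
    have heq := eLpNorm_norm_rpow f hq (p := ENNReal.ofReal r) (μ := P)
    try simp only [Real.norm_eq_abs] at heq
    rw [heq, ← ENNReal.ofReal_mul (by positivity : (0:ℝ) ≤ r)]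
    have : r * q = p := by rw [hr]; field_simp
    rw [this]
    exact ENNReal.rpow_lt_top_of_nonneg hq.le hf.2.ne
  have hG : MemLp (fun _ : Ω => (1:ℝ)) (ENNReal.ofReal (Real.conjExponent r)) P := memLp_const 1
  have key := integral_mul_le_Lp_mul_Lq_of_nonneg hpq
    (Filter.Eventually.of_forall fun ω => Real.rpow_nonneg (abs_nonneg _) q)
    (Filter.Eventually.of_forall fun _ => zero_le_one) hF hG
  simp only [mul_one, Real.one_rpow, integral_const, measure_univ, ENNReal.toReal_one,
    one_smul, probReal_univ, smul_eq_mul] at key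
  have hrw : ∀ a : Ω, (|f a| ^ q) ^ r = |f a| ^ p := by
    intro a
    rw [← Real.rpow_mul (abs_nonneg _)]
    congr 1
    rw [hr]; field_simp
  simp only [hrw] at key
  have h1r : 1 / r = q / p := by rw [hr]; field_simp
  rwa [h1r] at key

lemma ros_int_rpow {Ω : Type} [MeasurableSpace Ω] {P : Measure Ω} [IsFiniteMeasure P]
    {p q : ℝ} {f : Ω → ℝ} (hq : 0 < q) (hqp : q ≤ p) (hf : MemLp f (ENNReal.ofReal p) P) :
    Integrable (fun ω => |f ω| ^ q) P := by
  have h1 : MemLp f (ENNReal.ofReal q) P :=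
    hf.mono_exponent (ENNReal.ofReal_le_ofReal hqp)
  have h2 := h1.integrable_norm_rpow (by simp [hq.not_ge]) ENNReal.ofReal_ne_top
  simpa [ENNReal.toReal_ofReal hq.le, Real.norm_eq_abs] using h2

lemma ros_step {Ω : Type} [MeasurableSpace Ω] {P : Measure Ω} [IsProbabilityMeasure P]
    {p : ℝ} (hp : 2 < p) {S Z : Ω → ℝ} (hSZ : IndepFun S Z P)
    (hS : MemLp S (ENNReal.ofReal p) P) (hZ : MemLp Z (ENNReal.ofReal p) P)
    (hZ0 : ∫ ω, Z ω ∂P = 0) :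
    ∫ ω, |S ω + Z ω| ^ p ∂P ≤ ∫ ω, |S ω| ^ p ∂P
      + rosc p * ((∫ ω, |S ω| ^ (p - 2) ∂P) * (∫ ω, Z ω ^ 2 ∂P) + ∫ ω, |Z ω| ^ p ∂P) := by
  have hp0 : (0:ℝ) < p := by linarith
  -- the test functions
  set φ : ℝ → ℝ := fun t => p * (|t| ^ (p - 2) * t) with hφ
  have hφc : Continuous φ :=
    continuous_const.mul ((continuous_abs.rpow_const fun x => Or.inr (by linarith)).mul
      continuous_id)
  set ψ : ℝ → ℝ := fun t => |t| ^ (p - 2) with hψ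
  have hψc : Continuous ψ := continuous_abs.rpow_const fun x => Or.inr (by linarith)
  have hsq : Continuous fun t : ℝ => t ^ 2 := by continuity
  -- integrabilities
  have iSp : Integrable (fun ω => |S ω| ^ p) P := ros_int_rpow hp0 le_rfl hS
  have iZp : Integrable (fun ω => |Z ω| ^ p) P := ros_int_rpow hp0 le_rfl hZ
  have iSp2 : Integrable (fun ω => |S ω| ^ (p - 2)) P :=
    ros_int_rpow (by linarith) (by linarith) hS
  have iSp1 : Integrable (fun ω => |S ω| ^ (p - 1)) P :=
    ros_int_rpow (by linarith) (by linarith) hS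
  have iZ : Integrable Z P := hZ.integrable (by
    simpa using ENNReal.one_le_ofReal.mpr (by linarith))
  have iZ2 : Integrable (fun ω => Z ω ^ 2) P := by
    have h2 : MemLp Z 2 P := by
      refine hZ.mono_exponent ?_
      rw [show (2 : ℝ≥0∞) = ENNReal.ofReal 2 by simp]
      exact ENNReal.ofReal_le_ofReal (by linarith)
    simpa using h2.integrable_sq
  have habsφ : ∀ t : ℝ, |φ t| = p * |t| ^ (p - 1) := by
    intro t
    rcases eq_or_ne t 0 with rfl | ht
    · simp [hφ, Real.zero_rpow (show p - 1 ≠ 0 from (by linarith : (0:ℝ) < p - 1).ne')]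
    · have habs : 0 < |t| := abs_pos.mpr ht
      have hkey : |t| ^ (p - 1) = |t| ^ (p - 2) * |t| := by
        have h := Real.rpow_add habs (p - 2) 1
        rw [Real.rpow_one] at h
        rw [show p - 1 = p - 2 + 1 by ring, h]
      rw [hφ]
      simp only
      rw [abs_mul, abs_mul, abs_of_nonneg hp0.le,
        abs_of_nonneg (Real.rpow_nonneg (abs_nonneg t) _), hkey]
  have iφS : Integrable (fun ω => φ (S ω)) P := by
    refine Integrable.mono' (iSp1.const_mul p) (hφc.comp_aestronglyMeasurable hS.1) ?_
    exact Filter.Eventually.of_forall fun ω => by rw [Real.norm_eq_abs, habsφ]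
  have hindφ : IndepFun (fun ω => φ (S ω)) Z P := hSZ.comp hφc.measurable measurable_id
  have hindψ : IndepFun (fun ω => ψ (S ω)) (fun ω => Z ω ^ 2) P :=
    hSZ.comp hψc.measurable hsq.measurable
  have iφSZ : Integrable (fun ω => φ (S ω) * Z ω) P := hindφ.integrable_mul iφS iZ
  have iψSZ2 : Integrable (fun ω => ψ (S ω) * Z ω ^ 2) P := hindψ.integrable_mul iSp2 iZ2
  have iSum : Integrable (fun ω => |S ω + Z ω| ^ p) P := ros_int_rpow hp0 le_rfl (hS.add hZ)
  -- pointwise bound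
  have hpt : ∀ ω, |S ω + Z ω| ^ p ≤ |S ω| ^ p + φ (S ω) * Z ω
      + rosc p * (ψ (S ω) * Z ω ^ 2 + |Z ω| ^ p) := by
    intro ω
    have h := ros_pointwise hp (S ω) (Z ω)
    calc |S ω + Z ω| ^ p ≤ |S ω| ^ p + p * |S ω| ^ (p - 2) * S ω * Z ω
        + rosc p * (|S ω| ^ (p - 2) * Z ω ^ 2 + |Z ω| ^ p) := h
      _ = |S ω| ^ p + φ (S ω) * Z ω + rosc p * (ψ (S ω) * Z ω ^ 2 + |Z ω| ^ p) := by
        rw [hφ, hψ]; ring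
  -- integrate
  have hint : ∫ ω, |S ω + Z ω| ^ p ∂P ≤ ∫ ω, (|S ω| ^ p + φ (S ω) * Z ω
      + rosc p * (ψ (S ω) * Z ω ^ 2 + |Z ω| ^ p)) ∂P := by
    refine integral_mono iSum ?_ hpt
    exact (iSp.add iφSZ).add ((iψSZ2.add iZp).const_mul (rosc p))
  have iA : Integrable (fun ω => |S ω| ^ p + φ (S ω) * Z ω) P := iSp.add iφSZ
  have iB : Integrable (fun ω => rosc p * (ψ (S ω) * Z ω ^ 2 + |Z ω| ^ p)) P :=
    (iψSZ2.add iZp).const_mul (rosc p)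
  rw [integral_add iA iB, integral_add iSp iφSZ, MeasureTheory.integral_const_mul,
    integral_add iψSZ2 iZp] at hint
  have hzero : ∫ ω, φ (S ω) * Z ω ∂P = 0 := by
    have h : ∫ ω, φ (S ω) * Z ω ∂P = (∫ ω, φ (S ω) ∂P) * ∫ ω, Z ω ∂P :=
      hindφ.integral_mul_eq_mul_integral (hφc.comp_aestronglyMeasurable hS.1) hZ.1
    rw [h, hZ0, mul_zero]
  have hprod : ∫ ω, ψ (S ω) * Z ω ^ 2 ∂P
      = (∫ ω, |S ω| ^ (p - 2) ∂P) * ∫ ω, Z ω ^ 2 ∂P :=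
    hindψ.integral_mul_eq_mul_integral (hψc.comp_aestronglyMeasurable hS.1)
      (hsq.comp_aestronglyMeasurable hZ.1)
  rw [hzero, hprod] at hint
  linarith [hint]

lemma ros_iIndepFun_congr {Ω ι : Type*} [MeasurableSpace Ω] {P : Measure Ω} {β : ι → Type*}
    [m : ∀ i, MeasurableSpace (β i)] {f g : ∀ i, Ω → β i}
    (h : iIndepFun f P) (hfg : ∀ i, f i =ᵐ[P] g i) : iIndepFun g P := by
  rw [iIndepFun_iff_measure_inter_preimage_eq_mul] at h ⊢
  intro S sets hsets
  have h1 := h S hsets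
  have he : ∀ i ∈ S, (g i ⁻¹' sets i : Set Ω) =ᵐ[P] (f i ⁻¹' sets i) := by
    intro i _
    rw [Filter.eventuallyEq_set]
    filter_upwards [hfg i] with ω hω
    simp [Set.mem_preimage, hω]
  have big : ∀ᵐ ω ∂P, ∀ i ∈ S, f i ω = g i ω :=
    (ae_ball_iff S.countable_toSet).mpr fun i _ => hfg i
  have hI : (⋂ i ∈ S, g i ⁻¹' sets i) =ᵐ[P] (⋂ i ∈ S, f i ⁻¹' sets i) := by
    rw [Filter.eventuallyEq_set]
    filter_upwards [big] with ω hω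
    simp only [Set.mem_iInter, Set.mem_preimage]
    exact forall₂_congr fun i hi => by rw [hω i hi]
  rw [measure_congr hI, h1]
  exact Finset.prod_congr rfl fun i hi => (measure_congr (he i hi)).symm

noncomputable def rosK (p : ℝ) : ℝ := max ((2 * rosc p) ^ (p / 2)) (2 * rosc p)

lemma rosK_pos {p : ℝ} (hp : 2 < p) : 0 < rosK p :=
  lt_of_lt_of_le (by linarith [rosc_pos hp]) (le_max_right _ _)

lemma ros_key_aux {p c : ℝ} (hp : 2 < p) (hcpos : 0 < c) :
    c * ((max ((2 * c) ^ (p / 2)) (2 * c)) ^ ((p - 2) / p) + 1)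
      ≤ max ((2 * c) ^ (p / 2)) (2 * c) := by
  set K := max ((2 * c) ^ (p / 2)) (2 * c) with hK
  have hKpos : 0 < K := lt_of_lt_of_le (by linarith) (le_max_right _ _)
  have hp0 : (0:ℝ) < p := by linarith
  have h2c : 2 * c ≤ K ^ (2 / p) := by
    have h1 : ((2 * c) ^ (p / 2) : ℝ) ^ (2 / p) = 2 * c := by
      rw [← Real.rpow_mul (by linarith), show p / 2 * (2 / p) = 1 by field_simp, Real.rpow_one]
    rw [← h1]
    exact Real.rpow_le_rpow (Real.rpow_nonneg (by linarith) _) (le_max_left _ _) (by positivity)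
  have hmul : K ^ (2 / p) * K ^ ((p - 2) / p) = K := by
    rw [← Real.rpow_add hKpos, show 2 / p + (p - 2) / p = 1 by field_simp; ring, Real.rpow_one]
  have hθ : (0:ℝ) ≤ K ^ ((p - 2) / p) := Real.rpow_nonneg hKpos.le _
  have h1 : c * K ^ ((p - 2) / p) ≤ K / 2 := by
    have := mul_le_mul_of_nonneg_right h2c hθ
    rw [hmul] at this
    linarith
  have h2 : c ≤ K / 2 := by
    have := le_max_right ((2 * c) ^ (p / 2)) (2 * c)
    rw [← hK] at this
    linarith
  nlinarith

lemma rosK_key {p : ℝ} (hp : 2 < p) :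
    rosc p * (rosK p ^ ((p - 2) / p) + 1) ≤ rosK p := by
  unfold rosK
  exact ros_key_aux hp (rosc_pos hp)

lemma ros_main {Ω : Type} [MeasurableSpace Ω] {P : Measure Ω} [IsProbabilityMeasure P] {p : ℝ}
    (hp : 2 < p) {n : ℕ} {Y : Fin n → Ω → ℝ}
    (hmeas : ∀ j, Measurable (Y j))
    (hind : iIndepFun Y P)
    (hY : ∀ j, MemLp (Y j) (ENNReal.ofReal p) P)
    (hY0 : ∀ j, ∫ ω, Y j ω ∂P = 0) :
    ∫ ω, |∑ j, Y j ω| ^ p ∂P ≤ rosK p *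
      (max ((∑ j, ∫ ω, |Y j ω| ^ p ∂P) ^ (1 / p))
        ((∑ j, ∫ ω, Y j ω ^ 2 ∂P) ^ ((1:ℝ) / 2))) ^ p := by
  have hp0 : (0:ℝ) < p := by linarith
  set c := rosc p with hc
  have hcpos : 0 < c := rosc_pos hp
  set K := rosK p with hK
  have hKpos : 0 < K := rosK_pos hp
  set A := ∑ j : Fin n, ∫ ω, |Y j ω| ^ p ∂P with hA
  set B := ∑ j : Fin n, ∫ ω, Y j ω ^ 2 ∂P with hB
  set M := max (A ^ (1 / p)) (B ^ ((1:ℝ) / 2)) with hM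
  have hAnn : 0 ≤ A := Finset.sum_nonneg fun j _ =>
    integral_nonneg fun ω => Real.rpow_nonneg (abs_nonneg _) _
  have hBnn : 0 ≤ B := Finset.sum_nonneg fun j _ => integral_nonneg fun ω => sq_nonneg _
  have hMnn : 0 ≤ M := le_trans (Real.rpow_nonneg hAnn _) (le_max_left _ _)
  have hAM : A ≤ M ^ p := by
    have h1 : (A ^ (1 / p)) ^ p ≤ M ^ p :=
      Real.rpow_le_rpow (Real.rpow_nonneg hAnn _) (le_max_left _ _) hp0.le
    rwa [← Real.rpow_mul hAnn, show 1 / p * p = 1 by field_simp, Real.rpow_one] at h1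
  have hBM : B ≤ M ^ (2:ℝ) := by
    have h1 : (B ^ ((1:ℝ) / 2)) ^ (2:ℝ) ≤ M ^ (2:ℝ) :=
      Real.rpow_le_rpow (Real.rpow_nonneg hBnn _) (le_max_right _ _) (by norm_num)
    rwa [← Real.rpow_mul hBnn, show (1:ℝ) / 2 * 2 = 1 by norm_num, Real.rpow_one] at h1
  -- partial sums
  set a : ℕ → ℝ := fun k => if h : k < n then ∫ ω, |Y ⟨k, h⟩ ω| ^ p ∂P else 0 with ha
  set b : ℕ → ℝ := fun k => if h : k < n then ∫ ω, Y ⟨k, h⟩ ω ^ 2 ∂P else 0 with hb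
  have hann : ∀ k, 0 ≤ a k := by
    intro k; rw [ha]; dsimp only
    split
    · exact integral_nonneg fun ω => Real.rpow_nonneg (abs_nonneg _) _
    · exact le_rfl
  have hbnn : ∀ k, 0 ≤ b k := by
    intro k; rw [hb]; dsimp only
    split
    · exact integral_nonneg fun ω => sq_nonneg _
    · exact le_rfl
  have hsuma : ∀ k, ∑ i ∈ Finset.range k, a i ≤ A := by
    intro k
    have h1 : ∑ i ∈ Finset.range k, a i ≤ ∑ i ∈ Finset.range (max k n), a i :=
      Finset.sum_le_sum_of_subset_of_nonneg
        (Finset.range_subset_range.mpr (le_max_left _ _)) fun i _ _ => hann i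
    have h2 : ∑ i ∈ Finset.range (max k n), a i = ∑ i ∈ Finset.range n, a i :=
      (Finset.sum_subset (Finset.range_subset_range.mpr (le_max_right _ _)) fun i _ hni => by
        rw [ha]; exact dif_neg (by simpa using hni)).symm
    have h3 : ∑ i ∈ Finset.range n, a i = A := by
      rw [hA, ← Fin.sum_univ_eq_sum_range (fun i => a i) n]
      exact Finset.sum_congr rfl fun i _ => by rw [ha]; simp [i.isLt]
    rw [h2, h3] at h1; exact h1
  have hsumb : ∀ k, ∑ i ∈ Finset.range k, b i ≤ B := by
    intro k
    have h1 : ∑ i ∈ Finset.range k, b i ≤ ∑ i ∈ Finset.range (max k n), b i :=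
      Finset.sum_le_sum_of_subset_of_nonneg
        (Finset.range_subset_range.mpr (le_max_left _ _)) fun i _ _ => hbnn i
    have h2 : ∑ i ∈ Finset.range (max k n), b i = ∑ i ∈ Finset.range n, b i :=
      (Finset.sum_subset (Finset.range_subset_range.mpr (le_max_right _ _)) fun i _ hni => by
        rw [hb]; exact dif_neg (by simpa using hni)).symm
    have h3 : ∑ i ∈ Finset.range n, b i = B := by
      rw [hB, ← Fin.sum_univ_eq_sum_range (fun i => b i) n]
      exact Finset.sum_congr rfl fun i _ => by rw [hb]; simp [i.isLt]
    rw [h2, h3] at h1; exact h1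
  -- partial sums of the variables
  set S : ℕ → Ω → ℝ := fun k ω => ∑ j ∈ Finset.univ.filter (fun j : Fin n => (j:ℕ) < k), Y j ω
    with hS
  set s : ℕ → ℝ := fun k => ∫ ω, |S k ω| ^ p ∂P with hs
  have hSmem : ∀ k, MemLp (S k) (ENNReal.ofReal p) P := by
    intro k
    rw [hS]
    exact memLp_finset_sum _ fun j _ => hY j
  have hsnn : ∀ k, 0 ≤ s k := fun k =>
    integral_nonneg fun ω => Real.rpow_nonneg (abs_nonneg _) _
  have hs0 : s 0 = 0 := by
    rw [hs, hS]
    simp [Real.zero_rpow hp0.ne']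
  have hstep : ∀ k, s (k + 1) ≤ s k + c * (s k ^ ((p - 2) / p) * b k + a k) := by
    intro k
    by_cases hk : k < n
    · have hnot : (⟨k, hk⟩ : Fin n) ∉ Finset.univ.filter (fun j : Fin n => (j:ℕ) < k) := by
        simp
      have hfil : Finset.univ.filter (fun j : Fin n => (j:ℕ) < k + 1)
          = insert ⟨k, hk⟩ (Finset.univ.filter (fun j : Fin n => (j:ℕ) < k)) := by
        ext j
        simp only [Finset.mem_filter, Finset.mem_univ, true_and, Finset.mem_insert,
          Fin.ext_iff]
        omega
      have hSadd : S (k + 1) = fun ω => S k ω + Y ⟨k, hk⟩ ω := by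
        funext ω
        rw [hS]
        dsimp only
        rw [hfil, Finset.sum_insert hnot]
        ring
      have hindSk : IndepFun (S k) (Y ⟨k, hk⟩) P := by
        have h := hind.indepFun_finset_sum_of_notMem hmeas hnot
        have he : (∑ j ∈ Finset.univ.filter (fun j : Fin n => (j:ℕ) < k), Y j) = S k := by
          funext ω
          rw [hS]
          simp [Finset.sum_apply]
        rwa [he] at h
      have hjen : ∫ ω, |S k ω| ^ (p - 2) ∂P ≤ s k ^ ((p - 2) / p) :=
        ros_jensen (by linarith) (by linarith) (hSmem k)
      have hak : a k = ∫ ω, |Y ⟨k, hk⟩ ω| ^ p ∂P := by rw [ha]; exact dif_pos hk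
      have hbk : b k = ∫ ω, Y ⟨k, hk⟩ ω ^ 2 ∂P := by rw [hb]; exact dif_pos hk
      have hZnn : 0 ≤ ∫ ω, Y ⟨k, hk⟩ ω ^ 2 ∂P := integral_nonneg fun ω => sq_nonneg _
      have hstep1 := ros_step hp hindSk (hSmem k) (hY _) (hY0 _)
      have hs1 : s (k + 1) = ∫ ω, |S k ω + Y ⟨k, hk⟩ ω| ^ p ∂P := by
        rw [hs]; dsimp only; rw [hSadd]
      rw [hs1, hak, hbk]
      refine le_trans hstep1 ?_
      have hmono : (∫ ω, |S k ω| ^ (p - 2) ∂P) * ∫ ω, Y ⟨k, hk⟩ ω ^ 2 ∂P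
          ≤ s k ^ ((p - 2) / p) * ∫ ω, Y ⟨k, hk⟩ ω ^ 2 ∂P :=
        mul_le_mul_of_nonneg_right hjen hZnn
      have := mul_le_mul_of_nonneg_left
        (add_le_add_right hmono (∫ ω, |Y ⟨k, hk⟩ ω| ^ p ∂P)) hcpos.le
      linarith
    · have hfil : Finset.univ.filter (fun j : Fin n => (j:ℕ) < k + 1)
          = Finset.univ.filter (fun j : Fin n => (j:ℕ) < k) := by
        ext j
        simp only [Finset.mem_filter, Finset.mem_univ, true_and]
        have := j.isLt
        omega
      have hSeq : S (k + 1) = S k := by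
        funext ω; rw [hS]; dsimp only; rw [hfil]
      have hak : a k = 0 := by rw [ha]; exact dif_neg hk
      have hbk : b k = 0 := by rw [hb]; exact dif_neg hk
      have hs1 : s (k + 1) = s k := by rw [hs]; dsimp only; rw [hSeq]
      rw [hs1, hak, hbk]
      simp
  have htel : ∀ k, s k ≤ c * ∑ i ∈ Finset.range k, (s i ^ ((p - 2) / p) * b i + a i) := by
    intro k
    induction k with
    | zero => simp [hs0]
    | succ k ih =>
      have h1 := hstep k
      have h2 : c * ∑ i ∈ Finset.range (k + 1), (s i ^ ((p - 2) / p) * b i + a i)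
          = c * ∑ i ∈ Finset.range k, (s i ^ ((p - 2) / p) * b i + a i)
            + c * (s k ^ ((p - 2) / p) * b k + a k) := by
        rw [Finset.sum_range_succ, mul_add]
      linarith
  have hmain : ∀ k, s k ≤ K * M ^ p := by
    intro k
    induction k using Nat.strong_induction_on with
    | _ k ih =>
      have hKM : 0 ≤ K * M ^ p := mul_nonneg hKpos.le (Real.rpow_nonneg hMnn _)
      have h1 : ∀ i ∈ Finset.range k, s i ^ ((p - 2) / p) * b i + a i
          ≤ (K * M ^ p) ^ ((p - 2) / p) * b i + a i := by
        intro i hi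
        have h2 := Real.rpow_le_rpow (hsnn i) (ih i (Finset.mem_range.mp hi))
          (div_nonneg (show (0:ℝ) ≤ p - 2 by linarith) hp0.le)
        exact add_le_add_left (mul_le_mul_of_nonneg_right h2 (hbnn i)) _
      have hKMθ : 0 ≤ (K * M ^ p) ^ ((p - 2) / p) := Real.rpow_nonneg hKM _
      calc s k ≤ c * ∑ i ∈ Finset.range k, (s i ^ ((p - 2) / p) * b i + a i) := htel k
        _ ≤ c * ∑ i ∈ Finset.range k, ((K * M ^ p) ^ ((p - 2) / p) * b i + a i) :=
            mul_le_mul_of_nonneg_left (Finset.sum_le_sum h1) hcpos.le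
        _ = c * ((K * M ^ p) ^ ((p - 2) / p) * ∑ i ∈ Finset.range k, b i
              + ∑ i ∈ Finset.range k, a i) := by
            rw [Finset.sum_add_distrib, Finset.mul_sum]
        _ ≤ c * ((K * M ^ p) ^ ((p - 2) / p) * B + A) := by
            refine mul_le_mul_of_nonneg_left ?_ hcpos.le
            exact add_le_add (mul_le_mul_of_nonneg_left (hsumb k) hKMθ) (hsuma k)
        _ ≤ K * M ^ p := by
            have he1 : (K * M ^ p) ^ ((p - 2) / p)
                = K ^ ((p - 2) / p) * M ^ (p - 2) := by
              rw [Real.mul_rpow hKpos.le (Real.rpow_nonneg hMnn _),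
                ← Real.rpow_mul hMnn, show p * ((p - 2) / p) = p - 2 by field_simp]
            have he2 : M ^ (p - 2) * M ^ (2:ℝ) = M ^ p := by
              rw [← Real.rpow_add' hMnn (show p - 2 + 2 ≠ 0 by
                rw [show p - 2 + 2 = p by ring]; exact hp0.ne'),
                show p - 2 + 2 = p by ring]
            have hKθnn : 0 ≤ K ^ ((p - 2) / p) := Real.rpow_nonneg hKpos.le _
            have hMp2nn : 0 ≤ M ^ (p - 2) := Real.rpow_nonneg hMnn _
            have hb1 : K ^ ((p - 2) / p) * M ^ (p - 2) * B
                ≤ K ^ ((p - 2) / p) * M ^ (p - 2) * M ^ (2:ℝ) :=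
              mul_le_mul_of_nonneg_left hBM (mul_nonneg hKθnn hMp2nn)
            have hb2 : K ^ ((p - 2) / p) * M ^ (p - 2) * M ^ (2:ℝ)
                = K ^ ((p - 2) / p) * M ^ p := by rw [mul_assoc, he2]
            have hkey := rosK_key hp
            rw [← hc, ← hK] at hkey
            have hMpnn : 0 ≤ M ^ p := Real.rpow_nonneg hMnn _
            have := mul_le_mul_of_nonneg_right hkey hMpnn
            rw [he1]
            nlinarith [hAM]
  -- conclusion
  have hfin : S n = fun ω => ∑ j, Y j ω := by
    funext ω
    rw [hS]
    dsimp only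
    rw [Finset.filter_true_of_mem fun j _ => j.isLt]
  have := hmain n
  rw [hs] at this
  dsimp only at this
  rw [hfin] at this
  simpa using this

theorem stmt_3 (p : ℝ) (hp : 2 < p) :
    ∃ C : ℝ, 0 < C ∧
      ∀ (Ω : Type) (_ : MeasurableSpace Ω) (P : Measure Ω) (_ : IsProbabilityMeasure P)
        (n : ℕ) (Y : Fin n → Ω → ℝ),
        iIndepFun Y P →
        (∀ j, MemLp (Y j) (ENNReal.ofReal p) P) →
        (∀ j, ∫ ω, Y j ω ∂P = 0) →
        (∫ ω, |∑ j, Y j ω| ^ p ∂P) ^ (1 / p)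
          ≤ C * max ((∑ j, ∫ ω, |Y j ω| ^ p ∂P) ^ (1 / p))
              ((∑ j, ∫ ω, |Y j ω| ^ 2 ∂P) ^ ((1 : ℝ) / 2)) := by
  have hp0 : (0:ℝ) < p := by linarith
  refine ⟨max (rosK p ^ (1 / p)) 1, lt_of_lt_of_le one_pos (le_max_right _ _), ?_⟩
  intro Ω mΩ P hPr n Y hind hY hY0
  set Y' : Fin n → Ω → ℝ := fun j => AEStronglyMeasurable.mk (Y j) (hY j).1 with hY'def
  have hYae : ∀ j, Y j =ᵐ[P] Y' j := fun j => (hY j).1.ae_eq_mk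
  have hY'meas : ∀ j, Measurable (Y' j) := fun j =>
    ((hY j).1.stronglyMeasurable_mk).measurable
  have hY'mem : ∀ j, MemLp (Y' j) (ENNReal.ofReal p) P := fun j => (hY j).ae_eq (hYae j)
  have hY'0 : ∀ j, ∫ ω, Y' j ω ∂P = 0 := fun j => by
    rw [← integral_congr_ae (hYae j)]; exact hY0 j
  have hind' : iIndepFun Y' P := ros_iIndepFun_congr hind hYae
  have key := ros_main hp hY'meas hind' hY'mem hY'0
  have hL : ∫ ω, |∑ j, Y j ω| ^ p ∂P = ∫ ω, |∑ j, Y' j ω| ^ p ∂P := by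
    refine integral_congr_ae ?_
    have hall : ∀ᵐ ω ∂P, ∀ j, Y j ω = Y' j ω := ae_all_iff.mpr hYae
    filter_upwards [hall] with ω hω
    rw [Finset.sum_congr rfl fun j _ => hω j]
  have hA : (∑ j, ∫ ω, |Y j ω| ^ p ∂P) = ∑ j, ∫ ω, |Y' j ω| ^ p ∂P :=
    Finset.sum_congr rfl fun j _ =>
      integral_congr_ae (by filter_upwards [hYae j] with ω h; rw [h])
  have hB : (∑ j, ∫ ω, |Y j ω| ^ 2 ∂P) = ∑ j, ∫ ω, Y' j ω ^ 2 ∂P :=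
    Finset.sum_congr rfl fun j _ =>
      integral_congr_ae (by filter_upwards [hYae j] with ω h; rw [h, sq_abs])
  rw [hL, hA, hB]
  set M := max ((∑ j, ∫ ω, |Y' j ω| ^ p ∂P) ^ (1 / p))
    ((∑ j, ∫ ω, Y' j ω ^ 2 ∂P) ^ ((1:ℝ) / 2)) with hM
  have hMnn : 0 ≤ M :=
    le_trans (Real.rpow_nonneg (Finset.sum_nonneg fun j _ =>
      integral_nonneg fun ω => Real.rpow_nonneg (abs_nonneg _) _) _) (le_max_left _ _)
  have h1 : (∫ ω, |∑ j, Y' j ω| ^ p ∂P) ^ (1 / p) ≤ (rosK p * M ^ p) ^ (1 / p) :=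
    Real.rpow_le_rpow (integral_nonneg fun ω => Real.rpow_nonneg (abs_nonneg _) _)
      key (by positivity)
  have h2 : (rosK p * M ^ p) ^ (1 / p) = rosK p ^ (1 / p) * M := by
    rw [Real.mul_rpow (rosK_pos hp).le (Real.rpow_nonneg hMnn _),
      ← Real.rpow_mul hMnn, show p * (1 / p) = 1 by field_simp, Real.rpow_one]
  refine le_trans h1 ?_
  rw [h2]
  exact mul_le_mul_of_nonneg_right (le_max_left _ _) hMnn
end

section
/- (Spectral gap implies concentration for sums) Let (Ω, F, P) be a probability space of environments ω ∈ (0,∞)^{E} indexed by a countable edge set E, satisfying the spectral gap inequality: E[(f - E f)²] ≤ C ∑_{e ∈ E} E[(∂_e f)²] for all f ∈ L²(P), where ∂_e f(ω) = limsup_{h→0} (f(ω + h δ_e) - f(ω))/h. Suppose further that for every ζ ≥ 1 and f ∈ L^{2ζ}(P) with E[f] = 0 one has the L^{2ζ} version: E[|f|^{2ζ}] ≤ C(ζ) E[(∑_e (∂_e f)²)^ζ]. Let R ⊂ ℤ^d be finite and for y ∈ R set f = ∑_{y ∈ R} Δμ_p(y) where Δμ_p(y) = μ(y)^p - E[μ(y)^p],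 μ(y) = ∑_{x: x∼y} ω({x,y}). If each edge e is incident to at most 2 vertices of ℤ^d and μ(0)^{2ζ(p-1)} is integrable with E[μ(0)^{2ζ(p-1)}] < ∞ (and P is stationary), then E[|∑_{y∈R} Δμ_p(y)|^{2ζ}] ≤ C' |R|^ζ for a constant C' depending on d, p, ζ, C. -/
set_option maxHeartbeats 1000000
set_option synthInstance.maxHeartbeats 200000


open MeasureTheory Filter

/-- Environments: a conductance for each edge of `ℤ^d`, where the edge `(x, i)`
represents `{x, x + eᵢ}`. -/
abbrev Env (d : ℕ) := ((Fin d → ℤ) × Fin d) → ℝ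

/-- Vertical derivative `∂_e f(ω) = limsup_{h → 0} (f(ω + h δ_e) - f(ω))/h`. -/
noncomputable def pder {d : ℕ} (f : Env d → ℝ) (e : (Fin d → ℤ) × Fin d) (ω : Env d) : ℝ :=
  Filter.limsup (fun h : ℝ => (f (Function.update ω e (ω e + h)) - f ω) / h)
    (nhdsWithin 0 {(0 : ℝ)}ᶜ)

/-- `μ(y) = ∑_{x ∼ y} ω({x,y})`: the sum of the conductances of the `2d` edges
incident to the vertex `y`. -/
def muV {d : ℕ} (ω : Env d) (y : Fin d → ℤ) : ℝ :=
  ∑ i : Fin d, (ω (y, i) + ω (fun j => y j - if j = i then 1 else 0, i))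

/-- Space shift of environments by `z ∈ ℤ^d`. -/
def shiftEnv {d : ℕ} (z : Fin d → ℤ) (ω : Env d) : Env d :=
  fun e => ω (fun j => e.1 j + z j, e.2)

namespace SGaux

variable {d : ℕ}

/-- vertex `x + eᵢ` -/
def up (x : Fin d → ℤ) (i : Fin d) : Fin d → ℤ := fun j => x j + if j = i then 1 else 0
/-- vertex `y - eᵢ` -/
def dn (y : Fin d → ℤ) (i : Fin d) : Fin d → ℤ := fun j => y j - if j = i then 1 else 0

lemma dn_up (x : Fin d → ℤ) (i : Fin d) : dn (up x i) i = x := by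
  funext j; simp [dn, up]

lemma up_dn (y : Fin d → ℤ) (i : Fin d) : up (dn y i) i = y := by
  funext j; simp [dn, up]

lemma up_ne (x : Fin d → ℤ) (i : Fin d) : up x i ≠ x := by
  intro hc
  have := congrFun hc i
  simp [up] at this

lemma muV_def (ω : Env d) (y : Fin d → ℤ) :
    muV ω y = ∑ i : Fin d, (ω (y, i) + ω (dn y i, i)) := rfl

lemma muV_pos {ω : Env d} (hω : ∀ e, 0 < ω e) (hd : 0 < d) (y : Fin d → ℤ) :
    0 < muV ω y := by
  haveI : Nonempty (Fin d) := Fin.pos_iff_nonempty.mp hd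
  exact Finset.sum_pos (fun i _ => add_pos (hω _) (hω _)) Finset.univ_nonempty

lemma muV_update (ω : Env d) (x : Fin d → ℤ) (i : Fin d) (h : ℝ) (y : Fin d → ℤ) :
    muV (Function.update ω (x, i) (ω (x, i) + h)) y
      = muV ω y + ((if y = x then (1:ℝ) else 0) + (if y = up x i then 1 else 0)) * h := by
  have key : ∀ b : (Fin d → ℤ) × Fin d,
      Function.update ω (x, i) (ω (x, i) + h) b = ω b + (if b = (x, i) then h else 0) := by
    intro b
    rcases eq_or_ne b (x, i) with rfl | hb
    · simp
    · simp [Function.update_apply, hb]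
  have e1 : ∀ j : Fin d, (if ((y, j) : (Fin d → ℤ) × Fin d) = (x, i) then h else 0)
      = if j = i then (if y = x then h else 0) else 0 := by
    intro j
    by_cases h1 : j = i <;> by_cases h2 : y = x <;> simp [Prod.ext_iff, h1, h2]
  have e2 : ∀ j : Fin d, (if ((dn y j, j) : (Fin d → ℤ) × Fin d) = (x, i) then h else 0)
      = if j = i then (if y = up x i then h else 0) else 0 := by
    intro j
    by_cases h1 : j = i
    · subst h1
      by_cases h2 : y = up x j
      · rw [h2, dn_up]; simp
      · have h3 : dn y j ≠ x := fun hc => h2 (by rw [← up_dn y j, hc])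
        simp [Prod.ext_iff, h3, h2]
    · simp [Prod.ext_iff, h1]
  rw [muV_def, muV_def]
  simp only [key]
  have split : ∀ j : Fin d,
      ((ω (y, j) + if ((y, j) : (Fin d → ℤ) × Fin d) = (x, i) then h else 0) +
        (ω (dn y j, j) + if ((dn y j, j) : (Fin d → ℤ) × Fin d) = (x, i) then h else 0))
      = (ω (y, j) + ω (dn y j, j)) +
        ((if j = i then (if y = x then h else 0) else 0) +
         (if j = i then (if y = up x i then h else 0) else 0)) := by
    intro j; rw [← e1 j, ← e2 j]; ring
  rw [Finset.sum_congr rfl (fun j _ => split j), Finset.sum_add_distrib,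
    Finset.sum_add_distrib, Finset.sum_add_distrib,
    Finset.sum_ite_eq' Finset.univ i, Finset.sum_ite_eq' Finset.univ i]
  simp only [Finset.mem_univ, if_true]
  rcases eq_or_ne y x with h1 | h1
  · subst h1
    rw [if_pos rfl, if_pos rfl, if_neg (fun hc => up_ne y i hc.symm),
      if_neg (fun hc => up_ne y i hc.symm)]
    ring
  · rw [if_neg h1, if_neg h1]
    by_cases h2 : y = up x i <;> simp [h2] <;> ring

lemma hasDerivAt_term (p m c : ℝ) (hm : m ≠ 0) :
    HasDerivAt (fun h : ℝ => (m + c * h) ^ p) (p * m ^ (p - 1) * c) 0 := by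
  have h1 : HasDerivAt (fun h : ℝ => m + c * h) c 0 := by
    simpa using ((hasDerivAt_id (0:ℝ)).const_mul c).const_add m
  have h2 : HasDerivAt (fun x : ℝ => x ^ p) (p * m ^ (p - 1)) (m + c * 0) := by
    rw [mul_zero, add_zero]
    exact Real.hasDerivAt_rpow_const (Or.inl hm)
  convert h1.rpow_const (p := p) (Or.inl (by simpa using hm)) using 1
  rw [mul_zero, add_zero]; ring


noncomputable def cc (x : Fin d → ℤ) (i : Fin d) (y : Fin d → ℤ) : ℝ :=
  (if y = x then (1:ℝ) else 0) + (if y = up x i then 1 else 0)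

lemma pder_sum (hd : 0 < d) (p : ℝ) (R : Finset (Fin d → ℤ))
    (κ : (Fin d → ℤ) → ℝ) {ω : Env d} (hω : ∀ e, 0 < ω e) (x : Fin d → ℤ) (i : Fin d) :
    pder (fun ω' => ∑ y ∈ R, (muV ω' y ^ p - κ y)) (x, i) ω
      = ∑ y ∈ R, p * muV ω y ^ (p - 1) * cc x i y := by
  classical
  set φ : ℝ → ℝ := fun h => ∑ y ∈ R, ((muV ω y + cc x i y * h) ^ p - κ y) with hφdef
  have hφ : HasDerivAt φ (∑ y ∈ R, p * muV ω y ^ (p - 1) * cc x i y) 0 :=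
    HasDerivAt.fun_sum fun y _ =>
      (hasDerivAt_term p (muV ω y) (cc x i y) (muV_pos hω hd y).ne').sub_const (κ y)
  have keyval : ∀ h : ℝ,
      (∑ y ∈ R, (muV (Function.update ω (x, i) (ω (x, i) + h)) y ^ p - κ y)) = φ h := by
    intro h
    refine Finset.sum_congr rfl fun y _ => ?_
    rw [muV_update ω x i h y]
    rfl
  have hfun : (fun h : ℝ => ((fun ω' => ∑ y ∈ R, (muV ω' y ^ p - κ y))
        (Function.update ω (x, i) (ω (x, i) + h))
        - (fun ω' => ∑ y ∈ R, (muV ω' y ^ p - κ y)) ω) / h)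
      = fun h : ℝ => h⁻¹ • (φ (0 + h) - φ 0) := by
    funext h
    have h0 : φ 0 = ∑ y ∈ R, (muV ω y ^ p - κ y) := by
      simp [hφdef]
    show ((∑ y ∈ R, (muV (Function.update ω (x, i) (ω (x, i) + h)) y ^ p - κ y))
        - ∑ y ∈ R, (muV ω y ^ p - κ y)) / h = _
    rw [zero_add, keyval h, h0]
    simp only [smul_eq_mul]
    rw [div_eq_inv_mul]
  unfold pder
  rw [hfun]
  exact (hφ.tendsto_slope_zero).limsup_eq

lemma pder_sum_AB (hd : 0 < d) (p : ℝ) (R : Finset (Fin d → ℤ))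
    (κ : (Fin d → ℤ) → ℝ) {ω : Env d} (hω : ∀ e, 0 < ω e) (x : Fin d → ℤ) (i : Fin d) :
    pder (fun ω' => ∑ y ∈ R, (muV ω' y ^ p - κ y)) (x, i) ω
      = p * ((if x ∈ R then muV ω x ^ (p - 1) else 0)
          + (if up x i ∈ R then muV ω (up x i) ^ (p - 1) else 0)) := by
  classical
  rw [pder_sum hd p R κ hω x i]
  have point : ∀ y, p * muV ω y ^ (p - 1) * cc x i y
      = (if y = x then p * muV ω y ^ (p - 1) else 0)
        + (if y = up x i then p * muV ω y ^ (p - 1) else 0) := by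
    intro y
    unfold cc
    have hxu : x ≠ up x i := fun hc => up_ne x i hc.symm
    by_cases h1 : y = x <;> by_cases h2 : y = up x i <;> simp [h1, h2, hxu, up_ne x i] <;> try ring
  rw [Finset.sum_congr rfl (fun y _ => point y), Finset.sum_add_distrib,
    Finset.sum_ite_eq' R x, Finset.sum_ite_eq' R (up x i)]
  by_cases h1 : x ∈ R <;> by_cases h2 : up x i ∈ R <;> simp [h1, h2] <;> try ring

lemma tsum_pder_le (hd : 0 < d) (p : ℝ) (R : Finset (Fin d → ℤ))
    (κ : (Fin d → ℤ) → ℝ) {ω : Env d} (hω : ∀ e, 0 < ω e) :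
    ∑' e : (Fin d → ℤ) × Fin d, (pder (fun ω' => ∑ y ∈ R, (muV ω' y ^ p - κ y)) e ω) ^ 2
      ≤ 4 * (d : ℝ) * p ^ 2 * ∑ y ∈ R, (muV ω y ^ (p - 1)) ^ 2 := by
  classical
  set M : (Fin d → ℤ) → ℝ := fun y => muV ω y ^ (p - 1) with hM
  set A : (Fin d → ℤ) × Fin d → ℝ := fun e => if e.1 ∈ R then M e.1 else 0 with hA
  set B : (Fin d → ℤ) × Fin d → ℝ := fun e => if up e.1 e.2 ∈ R then M (up e.1 e.2) else 0 with hB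
  have hpder : ∀ e : (Fin d → ℤ) × Fin d,
      pder (fun ω' => ∑ y ∈ R, (muV ω' y ^ p - κ y)) e ω = p * (A e + B e) := by
    rintro ⟨x, i⟩
    exact pder_sum_AB hd p R κ hω x i
  set T : Finset ((Fin d → ℤ) × Fin d) := R ×ˢ (Finset.univ : Finset (Fin d)) with hT
  set T' : Finset ((Fin d → ℤ) × Fin d) :=
    R.biUnion (fun y => (Finset.univ : Finset (Fin d)).image
      (fun i => ((dn y i, i) : (Fin d → ℤ) × Fin d))) with hT'
  have hAzero : ∀ e ∉ T, A e = 0 := by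
    intro e he
    have : e.1 ∉ R := by
      intro hc; exact he (Finset.mem_product.mpr ⟨hc, Finset.mem_univ _⟩)
    simp [hA, this]
  have hBzero : ∀ e ∉ T', B e = 0 := by
    intro e he
    have : up e.1 e.2 ∉ R := by
      intro hc
      refine he (Finset.mem_biUnion.mpr ⟨up e.1 e.2, hc, Finset.mem_image.mpr ⟨e.2, Finset.mem_univ _, ?_⟩⟩)
      rw [dn_up]
    simp [hB, this]
  have hsupp : ∀ e ∉ T ∪ T',
      (pder (fun ω' => ∑ y ∈ R, (muV ω' y ^ p - κ y)) e ω) ^ 2 = 0 := by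
    intro e he
    rw [Finset.mem_union] at he
    push_neg at he
    rw [hpder e, hAzero e he.1, hBzero e he.2]
    simp
  rw [tsum_eq_sum hsupp]
  have step1 : ∑ e ∈ T ∪ T', (pder (fun ω' => ∑ y ∈ R, (muV ω' y ^ p - κ y)) e ω) ^ 2
      ≤ ∑ e ∈ T ∪ T', (2 * p ^ 2 * (A e ^ 2) + 2 * p ^ 2 * (B e ^ 2)) := by
    refine Finset.sum_le_sum fun e _ => ?_
    rw [hpder e]
    nlinarith [sq_nonneg (p * (A e - B e))]
  have hsumA : ∑ e ∈ T ∪ T', A e ^ 2 = (d : ℝ) * ∑ y ∈ R, M y ^ 2 := by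
    rw [← Finset.sum_subset Finset.subset_union_left
      (fun e _ he => by rw [hAzero e he]; ring)]
    rw [hT, Finset.sum_product]
    have : ∑ x ∈ R, ∑ i : Fin d, A (x, i) ^ 2 = ∑ x ∈ R, ∑ _i : Fin d, M x ^ 2 :=
      Finset.sum_congr rfl fun x hx => Finset.sum_congr rfl fun i _ => by simp [hA, hx]
    rw [this]
    simp [Finset.sum_const, Finset.card_univ, nsmul_eq_mul, Finset.mul_sum]
  have hsumB : ∑ e ∈ T ∪ T', B e ^ 2 = (d : ℝ) * ∑ y ∈ R, M y ^ 2 := by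
    have hdisj : (↑R : Set (Fin d → ℤ)).PairwiseDisjoint
        (fun y => (Finset.univ : Finset (Fin d)).image
          (fun i => ((dn y i, i) : (Fin d → ℤ) × Fin d))) := by
      intro y1 h1 y2 h2 hne
      simp only [Finset.disjoint_left, Finset.mem_image, Finset.mem_univ, true_and]
      rintro e ⟨i1, rfl⟩ ⟨i2, he2⟩
      have hi : i2 = i1 := (Prod.ext_iff.mp he2).2
      subst hi
      have : y2 = y1 := by
        have h5 : dn y2 i2 = dn y1 i2 := congrArg Prod.fst he2
        rw [← up_dn y2 i2, h5, up_dn]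
      exact hne this.symm
    rw [← Finset.sum_subset Finset.subset_union_right
      (fun e _ he => by rw [hBzero e he]; ring)]
    rw [hT', Finset.sum_biUnion hdisj]
    have key : ∀ y ∈ R, (∑ e ∈ (Finset.univ : Finset (Fin d)).image
        (fun i => ((dn y i, i) : (Fin d → ℤ) × Fin d)), B e ^ 2) = (d : ℝ) * M y ^ 2 := by
      intro y hy
      rw [Finset.sum_image (fun i _ i' _ hii' => (Prod.ext_iff.mp hii').2)]
      have : ∀ i ∈ (Finset.univ : Finset (Fin d)),
          B (dn y i, i) ^ 2 = M y ^ 2 := by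
        intro i _
        have : up (dn y i) i ∈ R := by rw [up_dn]; exact hy
        simp [hB, up_dn, hy]
      rw [Finset.sum_congr rfl this]
      simp [Finset.sum_const, Finset.card_univ, nsmul_eq_mul]
    rw [Finset.sum_congr rfl key, Finset.mul_sum]
  calc ∑ e ∈ T ∪ T', (pder (fun ω' => ∑ y ∈ R, (muV ω' y ^ p - κ y)) e ω) ^ 2
      ≤ ∑ e ∈ T ∪ T', (2 * p ^ 2 * (A e ^ 2) + 2 * p ^ 2 * (B e ^ 2)) := step1
    _ = 2 * p ^ 2 * (∑ e ∈ T ∪ T', A e ^ 2) + 2 * p ^ 2 * (∑ e ∈ T ∪ T', B e ^ 2) := by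
        rw [Finset.sum_add_distrib, Finset.mul_sum, Finset.mul_sum]
    _ = 4 * (d : ℝ) * p ^ 2 * ∑ y ∈ R, (muV ω y ^ (p - 1)) ^ 2 := by
        rw [hsumA, hsumB]; ring


lemma measurable_rpow_comp {α : Type*} [MeasurableSpace α] {f : α → ℝ}
    (hf : Measurable f) {r : ℝ} (hr : 0 ≤ r) : Measurable fun x => f x ^ r :=
  (Real.continuous_rpow_const hr).measurable.comp hf

lemma measurable_muV (y : Fin d → ℤ) : Measurable (fun ω : Env d => muV ω y) := by
  unfold muV
  exact Finset.measurable_sum _ fun i _ =>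
    (measurable_pi_apply _).add (measurable_pi_apply _)

lemma measurable_shiftEnv (z : Fin d → ℤ) : Measurable (shiftEnv z : Env d → Env d) :=
  measurable_pi_lambda _ fun e => measurable_pi_apply _

lemma muV_shift (z : Fin d → ℤ) (ω : Env d) : muV (shiftEnv z ω) 0 = muV ω z := by
  unfold muV shiftEnv
  refine Finset.sum_congr rfl fun i _ => ?_
  have h1 : (fun j => (0 : Fin d → ℤ) j + z j) = z := by funext j; simp
  have h2 : (fun j => ((0 : Fin d → ℤ) j - if j = i then 1 else 0) + z j)
      = (fun j => z j - if j = i then 1 else 0) := by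
    funext j; simp only [Pi.zero_apply]; ring
  rw [h1, h2]

lemma integrable_muV_rpow {P : Measure (Env d)} [IsProbabilityMeasure P]
    (hstat : ∀ z : Fin d → ℤ, P.map (shiftEnv z) = P) {q : ℝ} (hq : 0 ≤ q)
    (hmom : Integrable (fun ω => (muV ω 0) ^ q) P) (y : Fin d → ℤ) :
    Integrable (fun ω => (muV ω y) ^ q) P := by
  have hmp : MeasurePreserving (shiftEnv y) P P := ⟨measurable_shiftEnv y, hstat y⟩
  have hmeas : AEStronglyMeasurable (fun ω => (muV ω 0) ^ q) P :=
    (measurable_rpow_comp (measurable_muV 0) hq).aestronglyMeasurable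
  have hcomp : (fun ω => (muV ω y) ^ q) = (fun ω => (muV ω 0) ^ q) ∘ (shiftEnv y) := by
    funext ω; simp [Function.comp, muV_shift]
  rw [hcomp]
  exact (hmp.integrable_comp hmeas).mpr hmom

lemma integral_muV_rpow {P : Measure (Env d)} [IsProbabilityMeasure P]
    (hstat : ∀ z : Fin d → ℤ, P.map (shiftEnv z) = P) {q : ℝ} (hq : 0 ≤ q) (y : Fin d → ℤ) :
    ∫ ω, (muV ω y) ^ q ∂P = ∫ ω, (muV ω 0) ^ q ∂P := by
  have hmeas : AEStronglyMeasurable (fun ω => (muV ω 0) ^ q) (P.map (shiftEnv y)) := by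
    rw [hstat y]
    exact (measurable_rpow_comp (measurable_muV 0) hq).aestronglyMeasurable
  have h1 : ∫ ω, (muV ω y) ^ q ∂P = ∫ ω, (muV (shiftEnv y ω) 0) ^ q ∂P := by
    refine integral_congr_ae (Filter.Eventually.of_forall fun ω => ?_)
    dsimp only
    rw [muV_shift]
  rw [h1, ← integral_map (measurable_shiftEnv y).aemeasurable hmeas, hstat y]

lemma jensen_sum {ι : Type*} (s : Finset ι) (hs : s.Nonempty) (g : ι → ℝ)
    (hg : ∀ y ∈ s, 0 ≤ g y) {ζ : ℝ} (hζ : 1 ≤ ζ) :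
    (∑ y ∈ s, g y) ^ ζ ≤ (s.card : ℝ) ^ (ζ - 1) * ∑ y ∈ s, g y ^ ζ := by
  set n : ℝ := (s.card : ℝ) with hn
  have hn0 : 0 < n := by
    rw [hn]; exact_mod_cast Finset.card_pos.mpr hs
  have h := Real.rpow_arith_mean_le_arith_mean_rpow s (fun _ => 1 / n) g
    (fun _ _ => by positivity) (by rw [Finset.sum_const, nsmul_eq_mul]; field_simp; exact hn.symm) hg hζ
  rw [← Finset.mul_sum, ← Finset.mul_sum, Real.mul_rpow (by positivity)
    (Finset.sum_nonneg hg)] at h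
  have h3 : n ^ ζ * ((1 / n) ^ ζ * (∑ y ∈ s, g y) ^ ζ)
      ≤ n ^ ζ * ((1 / n) * ∑ y ∈ s, g y ^ ζ) :=
    mul_le_mul_of_nonneg_left h (Real.rpow_nonneg hn0.le ζ)
  calc (∑ y ∈ s, g y) ^ ζ
      = n ^ ζ * ((1 / n) ^ ζ * (∑ y ∈ s, g y) ^ ζ) := by
        rw [← mul_assoc, ← Real.mul_rpow hn0.le (by positivity),
          mul_one_div_cancel hn0.ne', Real.one_rpow, one_mul]
    _ ≤ n ^ ζ * ((1 / n) * ∑ y ∈ s, g y ^ ζ) := h3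
    _ = n ^ (ζ - 1) * ∑ y ∈ s, g y ^ ζ := by
        rw [Real.rpow_sub hn0, Real.rpow_one]; ring

lemma rpow_sq_rpow {x : ℝ} (hx : 0 ≤ x) (a ζ : ℝ) :
    ((x ^ a) ^ 2) ^ ζ = x ^ (2 * ζ * a) := by
  rw [← Real.rpow_natCast (x ^ a) 2, ← Real.rpow_mul hx, ← Real.rpow_mul hx]
  norm_num
  ring_nf

end SGaux

theorem stmt_10 (d : ℕ) (hd : 2 ≤ d) (P : Measure (Env d)) [IsProbabilityMeasure P]
    (p ζ C : ℝ) (hp : 1 ≤ p) (hζ : 1 ≤ ζ) (hC : 0 < C)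
    (hpos : ∀ᵐ ω ∂P, ∀ e, 0 < ω e)
    (hstat : ∀ z : Fin d → ℤ, P.map (shiftEnv z) = P)
    (hSG : ∀ f : Env d → ℝ, MemLp f 2 P →
      ∫ ω, (f ω - ∫ ω', f ω' ∂P) ^ 2 ∂P ≤ C * ∑' e, ∫ ω, (pder f e ω) ^ 2 ∂P)
    (Cζ : ℝ) (hCζ : 0 < Cζ)
    (hSGζ : ∀ f : Env d → ℝ, MemLp f (ENNReal.ofReal (2 * ζ)) P → (∫ ω, f ω ∂P = 0) →
      ∫ ω, |f ω| ^ (2 * ζ) ∂P ≤ Cζ * ∫ ω, (∑' e, (pder f e ω) ^ 2) ^ ζ ∂P)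
    (hmom : Integrable (fun ω => (muV ω 0) ^ (2 * ζ * (p - 1))) P) :
    ∃ C' : ℝ, 0 < C' ∧ ∀ R : Finset (Fin d → ℤ),
      ∫ ω, |∑ y ∈ R, ((muV ω y) ^ p - ∫ ω', (muV ω' y) ^ p ∂P)| ^ (2 * ζ) ∂P
        ≤ C' * ((R.card : ℝ)) ^ ζ := by
  classical
  have hd0 : 0 < d := lt_of_lt_of_le two_pos hd
  have hdr : (0:ℝ) < (d:ℝ) := by exact_mod_cast hd0
  have hppos : (0:ℝ) < p := lt_of_lt_of_le one_pos hp
  have hζpos : (0:ℝ) < ζ := lt_of_lt_of_le one_pos hζ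
  have hbase : (0:ℝ) < 4 * (d:ℝ) * p ^ 2 := by positivity
  have hKpos : 0 < (4 * (d:ℝ) * p ^ 2) ^ ζ := Real.rpow_pos_of_pos hbase ζ
  set q : ℝ := 2 * ζ * (p - 1) with hq
  have hqnn : 0 ≤ q := by
    rw [hq]
    have : 0 ≤ p - 1 := by linarith
    positivity
  set E₀ : ℝ := ∫ ω, (muV ω 0) ^ q ∂P with hE₀
  have hE₀nn : 0 ≤ E₀ := by
    apply integral_nonneg_of_ae
    filter_upwards [hpos] with ω hω
    exact Real.rpow_nonneg (SGaux.muV_pos hω hd0 0).le q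
  refine ⟨Cζ * (4 * (d:ℝ) * p ^ 2) ^ ζ * (E₀ + 1),
    mul_pos (mul_pos hCζ hKpos) (by linarith), ?_⟩
  intro R
  rcases R.eq_empty_or_nonempty with rfl | hR
  · simp only [Finset.sum_empty, Finset.card_empty, Nat.cast_zero, abs_zero]
    rw [Real.zero_rpow (by positivity : (2:ℝ) * ζ ≠ 0), integral_zero,
      Real.zero_rpow hζpos.ne', mul_zero]
  · set f : Env d → ℝ := fun ω => ∑ y ∈ R, ((muV ω y) ^ p - ∫ ω', (muV ω' y) ^ p ∂P)
      with hf
    show ∫ ω, |f ω| ^ (2 * ζ) ∂P ≤ _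
    by_cases hint : Integrable (fun ω => |f ω| ^ (2 * ζ)) P
    case neg =>
      rw [integral_undef hint]
      exact mul_nonneg (mul_nonneg (mul_nonneg hCζ.le hKpos.le) (by linarith))
        (Real.rpow_nonneg (Nat.cast_nonneg _) ζ)
    case pos =>
      have hfm : Measurable f := by
        rw [hf]
        exact Finset.measurable_sum _ fun y _ =>
          (SGaux.measurable_rpow_comp (SGaux.measurable_muV y) (by linarith : (0:ℝ) ≤ p)).sub
            measurable_const
      have h2ζpos : (0:ℝ) < 2 * ζ := by linarith
      have hq0 : ENNReal.ofReal (2 * ζ) ≠ 0 := by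
        simp only [ne_eq, ENNReal.ofReal_eq_zero, not_le]; exact h2ζpos
      have hmem : MemLp f (ENNReal.ofReal (2 * ζ)) P := by
        have hiff := memLp_norm_rpow_iff (μ := P) (q := ENNReal.ofReal (2 * ζ))
          (p := ENNReal.ofReal (2 * ζ)) hfm.aestronglyMeasurable hq0 ENNReal.ofReal_ne_top
        rw [ENNReal.div_self hq0 ENNReal.ofReal_ne_top] at hiff
        apply hiff.mp
        rw [memLp_one_iff_integrable]
        have hh : (fun x => ‖f x‖ ^ (ENNReal.ofReal (2 * ζ)).toReal)
            = fun x => |f x| ^ (2 * ζ) := by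
          funext x; rw [ENNReal.toReal_ofReal h2ζpos.le, Real.norm_eq_abs]
        rw [hh]; exact hint
      have hfint : Integrable f P := hmem.integrable (by
        rw [← ENNReal.ofReal_one]
        exact ENNReal.ofReal_le_ofReal (by linarith))
      have hSint : Integrable (fun ω => ∑ y ∈ R, muV ω y ^ p) P := by
        have hh : (fun ω => ∑ y ∈ R, muV ω y ^ p)
            = fun ω => f ω + ∑ y ∈ R, ∫ ω', muV ω' y ^ p ∂P := by
          funext ω; simp only [hf]; rw [Finset.sum_sub_distrib]; ring
        rw [hh]; exact hfint.add (integrable_const _)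
      have hterm : ∀ y ∈ R, Integrable (fun ω => muV ω y ^ p) P := by
        intro y hy
        refine hSint.mono (SGaux.measurable_rpow_comp (SGaux.measurable_muV y)
          (by linarith : (0:ℝ) ≤ p)).aestronglyMeasurable ?_
        filter_upwards [hpos] with ω hω
        rw [Real.norm_eq_abs, Real.norm_eq_abs,
          abs_of_nonneg (Real.rpow_nonneg (SGaux.muV_pos hω hd0 y).le p),
          abs_of_nonneg (Finset.sum_nonneg fun z _ =>
            Real.rpow_nonneg (SGaux.muV_pos hω hd0 z).le p)]
        exact Finset.single_le_sum
          (fun z _ => Real.rpow_nonneg (SGaux.muV_pos hω hd0 z).le p) hy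
      have hzero : ∫ ω, f ω ∂P = 0 := by
        simp only [hf]
        rw [integral_finset_sum R (f := fun y ω => muV ω y ^ p - ∫ ω', muV ω' y ^ p ∂P)
          (fun y hy => (hterm y hy).sub (integrable_const _))]
        refine Finset.sum_eq_zero fun y hy => ?_
        rw [integral_sub (hterm y hy) (integrable_const _), integral_const]
        simp
      have hmain := hSGζ f hmem hzero
      set n : ℝ := (R.card : ℝ) with hn
      have hn0 : 0 < n := by rw [hn]; exact_mod_cast Finset.card_pos.mpr hR
      set b : Env d → ℝ := fun ω =>
        (4 * (d:ℝ) * p ^ 2) ^ ζ * n ^ (ζ - 1) * ∑ y ∈ R, muV ω y ^ q with hb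
      have hbint : Integrable b P := by
        rw [hb]
        exact (integrable_finset_sum R fun y _ =>
          SGaux.integrable_muV_rpow hstat hqnn hmom y).const_mul _
      have haeb : ∀ᵐ ω ∂P, (∑' e, (pder f e ω) ^ 2) ^ ζ ≤ b ω := by
        filter_upwards [hpos] with ω hω
        have h1 : ∑' e, (pder f e ω) ^ 2
            ≤ 4 * (d:ℝ) * p ^ 2 * ∑ y ∈ R, (muV ω y ^ (p - 1)) ^ 2 := by
          simp only [hf]
          exact SGaux.tsum_pder_le hd0 p R _ hω
        have h2 : (∑' e, (pder f e ω) ^ 2) ^ ζ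
            ≤ (4 * (d:ℝ) * p ^ 2 * ∑ y ∈ R, (muV ω y ^ (p - 1)) ^ 2) ^ ζ :=
          Real.rpow_le_rpow (tsum_nonneg fun e => sq_nonneg _) h1 hζpos.le
        have hsumnn : ∀ y ∈ R, 0 ≤ (muV ω y ^ (p - 1)) ^ 2 := fun y _ => sq_nonneg _
        have h3 : (4 * (d:ℝ) * p ^ 2 * ∑ y ∈ R, (muV ω y ^ (p - 1)) ^ 2) ^ ζ
            = (4 * (d:ℝ) * p ^ 2) ^ ζ * (∑ y ∈ R, (muV ω y ^ (p - 1)) ^ 2) ^ ζ :=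
          Real.mul_rpow hbase.le (Finset.sum_nonneg hsumnn)
        have h4 := SGaux.jensen_sum R hR (fun y => (muV ω y ^ (p - 1)) ^ 2) hsumnn hζ
        have h5 : ∀ y ∈ R, ((muV ω y ^ (p - 1)) ^ 2) ^ ζ = muV ω y ^ q := fun y _ =>
          SGaux.rpow_sq_rpow (SGaux.muV_pos hω hd0 y).le (p - 1) ζ
        rw [Finset.sum_congr rfl h5] at h4
        calc (∑' e, (pder f e ω) ^ 2) ^ ζ
            ≤ (4 * (d:ℝ) * p ^ 2) ^ ζ * (∑ y ∈ R, (muV ω y ^ (p - 1)) ^ 2) ^ ζ := by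
              rw [← h3]; exact h2
          _ ≤ (4 * (d:ℝ) * p ^ 2) ^ ζ * (n ^ (ζ - 1) * ∑ y ∈ R, muV ω y ^ q) :=
              mul_le_mul_of_nonneg_left h4 hKpos.le
          _ = b ω := by rw [hb]; ring
      have hRHS : ∫ ω, (∑' e, (pder f e ω) ^ 2) ^ ζ ∂P ≤ ∫ ω, b ω ∂P :=
        integral_mono_of_nonneg (Filter.Eventually.of_forall fun ω =>
          Real.rpow_nonneg (tsum_nonneg fun e => sq_nonneg _) ζ) hbint haeb
      have hbval : ∫ ω, b ω ∂P = (4 * (d:ℝ) * p ^ 2) ^ ζ * n ^ (ζ - 1) * (n * E₀) := by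
        rw [hb]
        rw [integral_const_mul]
        rw [integral_finset_sum R (f := fun y ω => muV ω y ^ q)
          (fun y _ => SGaux.integrable_muV_rpow hstat hqnn hmom y)]
        rw [Finset.sum_congr rfl (fun y _ => SGaux.integral_muV_rpow hstat hqnn y)]
        rw [Finset.sum_const, nsmul_eq_mul, ← hE₀, ← hn]
      have hnz : n ^ (ζ - 1) * n = n ^ ζ := by
        rw [Real.rpow_sub hn0, Real.rpow_one]
        field_simp
      calc ∫ ω, |f ω| ^ (2 * ζ) ∂P
          ≤ Cζ * ∫ ω, (∑' e, (pder f e ω) ^ 2) ^ ζ ∂P := hmain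
        _ ≤ Cζ * ((4 * (d:ℝ) * p ^ 2) ^ ζ * n ^ (ζ - 1) * (n * E₀)) :=
            mul_le_mul_of_nonneg_left (hRHS.trans_eq hbval) hCζ.le
        _ = Cζ * (4 * (d:ℝ) * p ^ 2) ^ ζ * E₀ * n ^ ζ := by
            rw [← hnz]; ring
        _ ≤ Cζ * (4 * (d:ℝ) * p ^ 2) ^ ζ * (E₀ + 1) * n ^ ζ := by
            have : 0 ≤ n ^ ζ := Real.rpow_nonneg hn0.le ζ
            nlinarith [mul_pos hCζ hKpos]
end
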